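/- arXiv:1306.4029 — 7 statements merged into one kernel-verified Lean document; each statement's English description precedes it below -/
import Mathlib

section
/- Let k ≥ 1 and let F be a k-CNF formula over n Boolean variables. Then the number of satisfying assignments of F that are isolated (i.e., isolated in all n directions) is at most 2^(n − n/k). -/
/-!
The encoding argument of Paturi, Pudlák and Zane. If `α` satisfies `F` and is isolated in
direction `i`, some clause of `F` is falsified by flipping `α i`: a critical clause, whose only
literal true under `α` is `(i, α i)`. For an ordering `π` of the variables, call `i` forced when it
comes last in `π` among the variables of such a clause; then `α i` is determined by the values of
`α` on the earlier variables. Hence, for fixed `π`, a satisfying `α` is determined by its values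
off its forced variables, so the sets of assignments agreeing with `α` off them are disjoint and
`∑ α, 2 ^ #forced(π, α) ≤ 2 ^ n`. For an isolated `α`, each variable is forced for at least a
`1 / k` fraction of the orderings, so the average of `#forced(π, α)` over `π` is at least `n / k`,
and by Jensen the average of `2 ^ #forced(π, α)` is at least `2 ^ (n / k)`. Summing this over
the isolated `α`, exchanging the sums and using the first bound for each `π` gives
`#isolated * 2 ^ (n / k) ≤ 2 ^ n`.
-/

open Classical

/-- An assignment `α` satisfies a CNF formula `F` (a finite set of clauses, each clause a
finite set of literals, a literal being a pair of a variable index and a sign) if every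
clause contains a literal made true by `α`. -/
def Satisfies {n : ℕ} (F : Finset (Finset (Fin n × Bool))) (α : Fin n → Bool) : Prop :=
  ∀ C ∈ F, ∃ l ∈ C, α l.1 = l.2

/-- The assignment obtained from `α` by flipping coordinate `i`. -/
def flipAt {n : ℕ} (α : Fin n → Bool) (i : Fin n) : Fin n → Bool :=
  Function.update α i (!α i)

open Finset Equiv
open scoped Nat

section Jensen

variable {ι : Type*}

theorem card_mul_two_rpow_average_le (s : Finset ι) (f : ι → ℝ) :
    #s * (2 : ℝ) ^ ((∑ i ∈ s, f i) / #s) ≤ ∑ i ∈ s, (2 : ℝ) ^ f i := by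
  rcases s.eq_empty_or_nonempty with rfl | hs
  · simp
  have hcard : (0 : ℝ) < #s := by exact_mod_cast hs.card_pos
  have hjensen := (convexOn_rpow_left (b := 2) two_pos).map_sum_le (t := s)
    (w := fun _ => (#s : ℝ)⁻¹) (p := f) (fun _ _ => by positivity)
    (by simp [hcard.ne']) (fun _ _ => Set.mem_univ _)
  simp only [smul_eq_mul, ← mul_sum] at hjensen
  simp only [inv_mul_eq_div] at hjensen
  rwa [← le_div_iff₀' hcard]

end Jensen

section LastAmong

variable {ι : Type*} [Fintype ι] [LinearOrder ι]

def lastAmong (S : Finset ι) (i : ι) : Finset (Perm ι) :=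
  {π | ∀ x ∈ S, x ≠ i → π x < π i}

theorem mem_lastAmong {S : Finset ι} {i : ι} {π : Perm ι} :
    π ∈ lastAmong S i ↔ ∀ x ∈ S, x ≠ i → π x < π i := by
  simp [lastAmong]

theorem mul_swap_mem_lastAmong {S : Finset ι} {a b : ι} (hb : b ∈ S) {π : Perm ι}
    (hπ : π ∈ lastAmong S a) : π * swap a b ∈ lastAmong S b := by
  obtain rfl | hab := eq_or_ne a b
  · rwa [swap_self, ← Perm.one_def, mul_one]
  simp only [mem_lastAmong, Perm.mul_apply, swap_apply_right] at hπ ⊢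
  intro x hxS hxb
  by_cases hxa : x = a
  · subst hxa
    rw [swap_apply_left]
    exact hπ b hb (Ne.symm hab)
  · rw [swap_apply_of_ne_of_ne hxa hxb]
    exact hπ x hxS hxa

theorem card_lastAmong_eq {S : Finset ι} {a b : ι} (ha : a ∈ S) (hb : b ∈ S) :
    #(lastAmong S a) = #(lastAmong S b) :=
  card_bij' (fun π _ => π * swap a b) (fun π _ => π * swap a b)
    (fun _ hπ => mul_swap_mem_lastAmong hb hπ)
    (fun _ hπ => swap_comm a b ▸ mul_swap_mem_lastAmong ha hπ)
    (fun _ _ => by rw [mul_assoc, swap_mul_self, mul_one])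
    (fun _ _ => by rw [mul_assoc, swap_mul_self, mul_one])

theorem factorial_le_card_mul_card_lastAmong {S : Finset ι} {i : ι} (hi : i ∈ S) :
    (Fintype.card ι)! ≤ #S * #(lastAmong S i) := by
  have hcover : (univ : Finset (Perm ι)) ⊆ S.biUnion (lastAmong S) := by
    intro π _
    obtain ⟨b, hbS, hbmax⟩ := S.exists_max_image π ⟨i, hi⟩
    refine mem_biUnion.2 ⟨b, hbS, mem_lastAmong.2 fun x hxS hxb => ?_⟩
    exact (hbmax x hxS).lt_of_ne (fun h => hxb (π.injective h))
  calc (Fintype.card ι)! = #(univ : Finset (Perm ι)) := by rw [card_univ, Fintype.card_perm]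
    _ ≤ #(S.biUnion (lastAmong S)) := card_le_card hcover
    _ ≤ ∑ j ∈ S, #(lastAmong S j) := card_biUnion_le
    _ = #S * #(lastAmong S i) := by
      rw [sum_congr rfl fun j hj => card_lastAmong_eq hj hi, sum_const, smul_eq_mul]

end LastAmong

section CriticalClause

variable {n : ℕ} (F : Finset (Finset (Fin n × Bool)))

@[simp]
theorem flipAt_apply_self (α : Fin n → Bool) (i : Fin n) : flipAt α i i = !α i :=
  Function.update_self i _ α

theorem flipAt_apply_of_ne (α : Fin n → Bool) {i j : Fin n} (h : j ≠ i) : flipAt α i j = α j :=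
  Function.update_of_ne h _ α

def IsCriticalClause (α : Fin n → Bool) (i : Fin n) (C : Finset (Fin n × Bool)) : Prop :=
  C ∈ F ∧ (i, α i) ∈ C ∧ ∀ l ∈ C, flipAt α i l.1 ≠ l.2

theorem exists_isCriticalClause {α : Fin n → Bool} {i : Fin n} (hα : Satisfies F α)
    (hflip : ¬ Satisfies F (flipAt α i)) : ∃ C, IsCriticalClause F α i C := by
  simp only [Satisfies, not_forall, not_exists, not_and] at hflip
  obtain ⟨C, hCF, hCflip⟩ := hflip
  obtain ⟨l, hl, hαl⟩ := hα C hCF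
  obtain hli | hli := eq_or_ne l.1 i
  · have hl_eq : l = (i, α i) := Prod.ext hli (hli ▸ hαl).symm
    exact ⟨C, hCF, hl_eq ▸ hl, hCflip⟩
  · exact absurd (by rw [flipAt_apply_of_ne α hli, hαl]) (hCflip l hl)

noncomputable def forcedVars (π : Perm (Fin n)) (α : Fin n → Bool) : Finset (Fin n) :=
  {i | ∃ C, IsCriticalClause F α i C ∧ ∀ l ∈ C, l.1 ≠ i → π l.1 < π i}

theorem mem_forcedVars {π : Perm (Fin n)} {α : Fin n → Bool} {i : Fin n} :
    i ∈ forcedVars F π α ↔ ∃ C, IsCriticalClause F α i C ∧ ∀ l ∈ C, l.1 ≠ i → π l.1 < π i := by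
  simp [forcedVars]

theorem eq_of_mem_forcedVars {π : Perm (Fin n)} {α β : Fin n → Bool} {v : Fin n}
    (hv : v ∈ forcedVars F π α) (hβ : Satisfies F β) (hagree : ∀ w, π w < π v → β w = α w) :
    β v = α v := by
  obtain ⟨C, ⟨hCF, -, hfalse⟩, hbefore⟩ := (mem_forcedVars F).1 hv
  obtain ⟨l, hl, hβl⟩ := hβ C hCF
  have hlfalse := hfalse l hl
  obtain hlv | hlv := eq_or_ne l.1 v
  · rw [hlv, flipAt_apply_self] at hlfalse
    have hαv : α v = l.2 := by simpa using hlfalse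
    rw [hαv, ← hβl, hlv]
  · rw [flipAt_apply_of_ne α hlv, ← hagree l.1 (hbefore l hl hlv)] at hlfalse
    exact absurd hβl hlfalse

end CriticalClause

section AgreeOff

variable {ι β : Type*} [Fintype ι] [DecidableEq ι] [Fintype β]

def agreeOff (S : Finset ι) (α : ι → β) : Finset (ι → β) :=
  Fintype.piFinset fun v => if v ∈ S then univ else {α v}

theorem mem_agreeOff {S : Finset ι} {α s : ι → β} : s ∈ agreeOff S α ↔ ∀ v ∉ S, s v = α v := by
  simp only [agreeOff, Fintype.mem_piFinset]
  refine forall_congr' fun v => ?_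
  split_ifs with hv <;> simp [hv]

theorem card_agreeOff (S : Finset ι) (α : ι → β) :
    #(agreeOff S α) = Fintype.card β ^ #S := by
  simp only [agreeOff, Fintype.card_piFinset, apply_ite card, card_univ, card_singleton]
  rw [Fintype.prod_ite_mem, prod_const]

end AgreeOff

section Encoding

variable {n : ℕ} (F : Finset (Finset (Fin n × Bool)))

theorem eq_of_mem_agreeOff_forcedVars {π : Perm (Fin n)} {α β s : Fin n → Bool}
    (hα : Satisfies F α) (hβ : Satisfies F β) (hsα : s ∈ agreeOff (forcedVars F π α) α)
    (hsβ : s ∈ agreeOff (forcedVars F π β) β) : α = β := by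
  by_contra hne
  obtain ⟨v, hvD, hvmin⟩ := exists_min_image {v | α v ≠ β v} π
    (filter_nonempty_iff.2 (by simpa [funext_iff] using hne))
  have hvne : α v ≠ β v := (mem_filter.1 hvD).2
  have hagree (w : Fin n) (hw : π w < π v) : β w = α w := by
    by_contra h
    exact (hvmin w (mem_filter.2 ⟨mem_univ _, Ne.symm h⟩)).not_gt hw
  by_cases hvα : v ∈ forcedVars F π α
  · exact hvne (eq_of_mem_forcedVars F hvα hβ hagree).symm
  by_cases hvβ : v ∈ forcedVars F π β
  · exact hvne (eq_of_mem_forcedVars F hvβ hα fun w hw => (hagree w hw).symm)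
  exact hvne ((mem_agreeOff.1 hsα v hvα).symm.trans (mem_agreeOff.1 hsβ v hvβ))

theorem sum_two_pow_card_forcedVars_le (π : Perm (Fin n)) {A : Finset (Fin n → Bool)}
    (hA : ∀ α ∈ A, Satisfies F α) : ∑ α ∈ A, 2 ^ #(forcedVars F π α) ≤ 2 ^ n := by
  have hdisj : (A : Set (Fin n → Bool)).PairwiseDisjoint
      fun α => agreeOff (forcedVars F π α) α := by
    intro α hα β hβ hne
    exact disjoint_left.2 fun s hsα hsβ => hne (eq_of_mem_agreeOff_forcedVars F (hA α hα)
      (hA β hβ) hsα hsβ)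
  calc ∑ α ∈ A, 2 ^ #(forcedVars F π α)
      = #(A.biUnion fun α => agreeOff (forcedVars F π α) α) := by
        simp [card_biUnion hdisj, card_agreeOff]
    _ ≤ Fintype.card (Fin n → Bool) := card_le_univ _
    _ = 2 ^ n := by simp

end Encoding

section Counting

variable {n k : ℕ} {F : Finset (Finset (Fin n × Bool))}

theorem factorial_le_mul_card_mem_forcedVars (hkcnf : ∀ C ∈ F, #C ≤ k) {α : Fin n → Bool}
    {i : Fin n} (hα : Satisfies F α) (hflip : ¬ Satisfies F (flipAt α i)) :
    n ! ≤ k * #{π : Perm (Fin n) | i ∈ forcedVars F π α} := by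
  obtain ⟨C, hC⟩ := exists_isCriticalClause F hα hflip
  have hiS : i ∈ C.image Prod.fst := mem_image_of_mem _ hC.2.1
  have hsub : lastAmong (C.image Prod.fst) i ⊆
      ({π : Perm (Fin n) | i ∈ forcedVars F π α} : Finset _) :=
    fun π hπ => mem_filter.2 ⟨mem_univ _, (mem_forcedVars F).2 ⟨C, hC,
      fun l hl hli => mem_lastAmong.1 hπ l.1 (mem_image_of_mem _ hl) hli⟩⟩
  calc n ! = (Fintype.card (Fin n))! := by rw [Fintype.card_fin]
    _ ≤ #(C.image Prod.fst) * #(lastAmong (C.image Prod.fst) i) :=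
      factorial_le_card_mul_card_lastAmong hiS
    _ ≤ k * #{π : Perm (Fin n) | i ∈ forcedVars F π α} :=
      Nat.mul_le_mul (card_image_le.trans (hkcnf C hC.1)) (card_le_card hsub)

theorem mul_factorial_le_sum_card_forcedVars (hkcnf : ∀ C ∈ F, #C ≤ k) {α : Fin n → Bool}
    (hα : Satisfies F α) (hiso : ∀ i, ¬ Satisfies F (flipAt α i)) :
    n * n ! ≤ k * ∑ π : Perm (Fin n), #(forcedVars F π α) := by
  have hswap : ∑ π : Perm (Fin n), #(forcedVars F π α)
      = ∑ i, #{π : Perm (Fin n) | i ∈ forcedVars F π α} := by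
    simpa [bipartiteAbove, bipartiteBelow] using
      sum_card_bipartiteAbove_eq_sum_card_bipartiteBelow (s := univ) (t := univ)
        (r := fun π i => i ∈ forcedVars F π α)
  calc n * n ! = ∑ _i : Fin n, n ! := by simp
    _ ≤ ∑ i, k * #{π : Perm (Fin n) | i ∈ forcedVars F π α} :=
      sum_le_sum fun i _ => factorial_le_mul_card_mem_forcedVars hkcnf hα (hiso i)
    _ = k * ∑ π : Perm (Fin n), #(forcedVars F π α) := by rw [hswap, mul_sum]

theorem factorial_mul_two_rpow_le_sum (hkcnf : ∀ C ∈ F, #C ≤ k) {α : Fin n → Bool}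
    (hα : Satisfies F α) (hiso : ∀ i, ¬ Satisfies F (flipAt α i)) :
    n ! * (2 : ℝ) ^ ((n : ℝ) / k) ≤ ∑ π : Perm (Fin n), (2 : ℝ) ^ #(forcedVars F π α) := by
  have hmean : (n : ℝ) / k ≤ (∑ π : Perm (Fin n), (#(forcedVars F π α) : ℝ)) / n ! := by
    rcases k.eq_zero_or_pos with rfl | hk
    · simp only [CharP.cast_eq_zero, div_zero]
      positivity
    rw [div_le_div_iff₀ (by positivity) (by positivity)]
    have h := mul_factorial_le_sum_card_forcedVars hkcnf hα hiso
    rw [mul_comm k] at h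
    exact_mod_cast h
  calc n ! * (2 : ℝ) ^ ((n : ℝ) / k)
      ≤ n ! * (2 : ℝ) ^ ((∑ π : Perm (Fin n), (#(forcedVars F π α) : ℝ)) / n !) := by
        gcongr
        norm_num
    _ ≤ ∑ π : Perm (Fin n), (2 : ℝ) ^ #(forcedVars F π α) := by
      simpa [Real.rpow_natCast, Fintype.card_perm] using
        card_mul_two_rpow_average_le univ fun π : Perm (Fin n) => (#(forcedVars F π α) : ℝ)

end Counting

theorem isolated_satisfying_count_le_general {n k : ℕ}
    (F : Finset (Finset (Fin n × Bool))) (hkcnf : ∀ C ∈ F, C.card ≤ k) :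
    ((Finset.univ.filter fun α : Fin n → Bool =>
        Satisfies F α ∧ ∀ i : Fin n, ¬ Satisfies F (flipAt α i)).card : ℝ)
      ≤ (2 : ℝ) ^ ((n : ℝ) - (n : ℝ) / (k : ℝ)) := by
  set A := Finset.univ.filter fun α : Fin n → Bool =>
    Satisfies F α ∧ ∀ i : Fin n, ¬ Satisfies F (flipAt α i)
  have hA (α) (hα : α ∈ A) := (mem_filter.1 hα).2
  have hπ (π : Perm (Fin n)) : ∑ α ∈ A, (2 : ℝ) ^ #(forcedVars F π α) ≤ 2 ^ n := by
    exact_mod_cast sum_two_pow_card_forcedVars_le F π fun α hα => (hA α hα).1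
  have hdouble : #A * (n ! * (2 : ℝ) ^ ((n : ℝ) / k)) ≤ n ! * 2 ^ n :=
    calc #A * (n ! * (2 : ℝ) ^ ((n : ℝ) / k))
        ≤ ∑ α ∈ A, ∑ π : Perm (Fin n), (2 : ℝ) ^ #(forcedVars F π α) := by
          rw [← nsmul_eq_mul, ← sum_const]
          exact sum_le_sum fun α hα => factorial_mul_two_rpow_le_sum hkcnf (hA α hα).1 (hA α hα).2
      _ = ∑ π : Perm (Fin n), ∑ α ∈ A, (2 : ℝ) ^ #(forcedVars F π α) := sum_comm
      _ ≤ ∑ _π : Perm (Fin n), (2 : ℝ) ^ n := sum_le_sum fun π _ => hπ π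
      _ = n ! * 2 ^ n := by simp [Fintype.card_perm]
  rw [Real.rpow_sub two_pos, Real.rpow_natCast, le_div_iff₀ (by positivity)]
  rw [mul_left_comm] at hdouble
  exact le_of_mul_le_mul_left hdouble (by positivity)

/-- A `k`-CNF formula (every clause has at most `k` literals) over `n` variables has at most
`2 ^ (n - n/k)` isolated satisfying assignments, i.e. satisfying assignments that are
isolated in all `n` directions. -/
theorem isolated_satisfying_count_le {n k : ℕ} (hk : 1 ≤ k)
    (F : Finset (Finset (Fin n × Bool))) (hkcnf : ∀ C ∈ F, C.card ≤ k) :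
    ((Finset.univ.filter fun α : Fin n → Bool =>
        Satisfies F α ∧ ∀ i : Fin n, ¬ Satisfies F (flipAt α i)).card : ℝ)
      ≤ (2 : ℝ) ^ ((n : ℝ) - (n : ℝ) / (k : ℝ)) :=
  isolated_satisfying_count_le_general F hkcnf
end

section
/- Let F be a satisfiable CNF formula over n Boolean variables, let sat(F) denote its set of satisfying assignments, and for α ∈ sat(F) let j(α) be the number of directions in which α is isolated. Then ∑_{α ∈ sat(F)} 2^(j(α)) ≥ 2^n. -/
/-!
Let `S` be the set of satisfying assignments, a nonempty subset of the cube `Bool ^ n`; nothing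
else about CNF formulas matters. Send every point `x` of the cube to a point `y ∈ S` nearest to
it in Hamming distance. If `y` is not isolated in direction `i`, every `x` sent to `y` agrees
with `y` at `i`, since otherwise flipping `y` at `i` would bring it closer to `x`. So the fibre
over `y` has at most `2 ^ j(y)` points, and the fibres partition the `2 ^ n` points of the cube.
-/

open Classical

open Finset Function

theorem hammingDist_update_self_lt {ι : Type*} [Fintype ι] [DecidableEq ι] {β : ι → Type*}
    [∀ i, DecidableEq (β i)] {x y : ∀ i, β i} {i : ι} (h : x i ≠ y i) :
    hammingDist x (update y i (x i)) < hammingDist x y := by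
  refine card_lt_card (ssubset_iff_of_subset ?_ |>.mpr ⟨i, by simpa using h, by simp⟩)
  intro j
  by_cases hj : j = i <;> simp_all

theorem card_le_card_pow_of_eqOn_compl {ι β : Type*} [Fintype β] {s : Finset (ι → β)}
    {y : ι → β} {J : Finset ι} (hs : ∀ x ∈ s, ∀ i ∉ J, x i = y i) :
    #s ≤ Fintype.card β ^ #J := by
  calc #s ≤ Fintype.card (J → β) := by
        refine card_le_card_of_injOn (fun x (i : J) => x i) (fun _ _ => mem_coe.2 (mem_univ _)) ?_
        intro x hx x' hx' hxx'
        funext i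
        by_cases hi : i ∈ J
        · exact congrFun hxx' ⟨i, hi⟩
        · rw [hs x hx i hi, hs x' hx' i hi]
    _ = Fintype.card β ^ #J := by simp

section BooleanCube

variable {ι : Type*} [Fintype ι] [DecidableEq ι]

theorem apply_eq_of_forall_hammingDist_le_of_update_mem {S : Finset (ι → Bool)}
    {x y : ι → Bool} (hy : ∀ z ∈ S, hammingDist x y ≤ hammingDist x z) {i : ι}
    (hflip : update y i (!y i) ∈ S) : x i = y i := by
  by_contra h
  have := hammingDist_update_self_lt h
  rw [← Bool.eq_not.mpr h] at hflip
  exact (hy _ hflip).not_gt this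

theorem two_pow_card_le_sum_two_pow_card_isolated {S : Finset (ι → Bool)} (hS : S.Nonempty) :
    2 ^ Fintype.card ι ≤ ∑ y ∈ S, 2 ^ #{i | update y i (!y i) ∉ S} := by
  choose nearest hnearest_mem hnearest_le using fun x => S.exists_min_image (hammingDist x) hS
  have hfiber (y : ι → Bool) : ∀ x ∈ ({x | nearest x = y} : Finset _),
      ∀ i ∉ ({i | update y i (!y i) ∉ S} : Finset _), x i = y i := by
    intro x hx i hi
    simp only [mem_filter, mem_univ, true_and, not_not] at hx hi
    exact hx ▸ apply_eq_of_forall_hammingDist_le_of_update_mem (hnearest_le x) (hx ▸ hi)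
  calc 2 ^ Fintype.card ι = #(univ : Finset (ι → Bool)) := by simp
    _ = ∑ y ∈ S, #{x | nearest x = y} := card_eq_sum_card_fiberwise fun x _ => hnearest_mem x
    _ ≤ ∑ y ∈ S, 2 ^ #{i | update y i (!y i) ∉ S} := sum_le_sum fun y _ =>
        (card_le_card_pow_of_eqOn_compl (hfiber y)).trans_eq (by rw [Fintype.card_bool])

end BooleanCube

/-- For a satisfiable CNF formula `F` over `n` variables, summing `2 ^ j(α)` over all
satisfying assignments `α`, where `j(α)` is the number of directions in which `α` is
isolated, gives at least `2 ^ n`. -/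
theorem sum_two_pow_isolation_ge {n : ℕ} (F : Finset (Finset (Fin n × Bool)))
    (hsat : ∃ α : Fin n → Bool, Satisfies F α) :
    2 ^ n ≤ ∑ α ∈ Finset.univ.filter (fun α : Fin n → Bool => Satisfies F α),
      2 ^ (Finset.univ.filter fun i : Fin n => ¬ Satisfies F (flipAt α i)).card := by
  obtain ⟨α, hα⟩ := hsat
  set S : Finset (Fin n → Bool) := {α | Satisfies F α}
  calc 2 ^ n = 2 ^ Fintype.card (Fin n) := by rw [Fintype.card_fin]
    _ ≤ ∑ β ∈ S, 2 ^ #{i | update β i (!β i) ∉ S} :=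
      two_pow_card_le_sum_two_pow_card_isolated ⟨α, by simpa [S] using hα⟩
    _ = _ := sum_congr rfl fun β _ => by
      congr 2; exact filter_congr fun i _ => by simp [S, flipAt]
end

section
/- Let S be a finite nonempty prefix-free set of finite binary strings. Then log₂ |S| is at most the average length (∑_{s ∈ S} |s|) / |S|; equivalently, |S| ≤ 2^((∑_{s ∈ S} |s|) / |S|). -/
/-!
A prefix-free set not containing the empty word is a uniquely decodable code, so Kraft–McMillan
gives `∑ s ∈ S, 2 ^ (-|s|) ≤ 1`. By convexity of `x ↦ 2 ^ x` (Jensen), `2 ^ (-avg) ≤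
(∑ s ∈ S, 2 ^ (-|s|)) / |S| ≤ 1 / |S|`, that is `|S| ≤ 2 ^ avg`.
-/

open Finset

namespace InformationTheory

variable {α : Type*}

def PrefixFree (S : Set (List α)) : Prop :=
  ∀ s ∈ S, ∀ t ∈ S, s <+: t → s = t

theorem PrefixFree.uniquelyDecodable {S : Set (List α)} (hpf : PrefixFree S) (hnil : [] ∉ S) :
    UniquelyDecodable S := by
  have flatten_eq_nil {L : List (List α)} (hL : ∀ w ∈ L, w ∈ S) (h : L.flatten = []) : L = [] :=
    List.eq_nil_iff_forall_not_mem.2 fun w hw =>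
      hnil (List.flatten_eq_nil_iff.1 h w hw ▸ hL w hw)
  intro L₁
  induction L₁ with
  | nil => exact fun L₂ _ h₂ h => (flatten_eq_nil h₂ h.symm).symm
  | cons w₁ L₁ ih =>
    rintro (_ | ⟨w₂, L₂⟩) h₁ h₂ h
    · exact flatten_eq_nil h₁ h
    · simp only [List.flatten_cons] at h
      have hw : w₁ = w₂ := by
        rcases List.prefix_or_prefix_of_prefix (List.prefix_append w₁ L₁.flatten)
            (h ▸ List.prefix_append w₂ L₂.flatten) with hp | hp
        · exact hpf _ (h₁ _ List.mem_cons_self) _ (h₂ _ List.mem_cons_self) hp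
        · exact (hpf _ (h₂ _ List.mem_cons_self) _ (h₁ _ List.mem_cons_self) hp).symm
      subst hw
      rw [ih L₂ (fun w hw => h₁ w (List.mem_cons_of_mem _ hw))
        (fun w hw => h₂ w (List.mem_cons_of_mem _ hw)) (List.append_cancel_left h)]

theorem PrefixFree.sum_pow_length_le_one [Fintype α] [Nonempty α] {S : Finset (List α)}
    (hpf : PrefixFree (S : Set (List α))) :
    ∑ w ∈ S, (1 / Fintype.card α : ℝ) ^ w.length ≤ 1 := by
  by_cases hnil : [] ∈ S
  · -- the empty word is a prefix of every word, so `S = {[]}`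
    have : S = {[]} := eq_singleton_iff_unique_mem.2
      ⟨hnil, fun t ht => (hpf _ hnil _ ht List.nil_prefix).symm⟩
    simp [this]
  · exact kraft_mcmillan_inequality (hpf.uniquelyDecodable hnil)

end InformationTheory

theorem Real.rpow_sum_div_card_le_sum_rpow_div_card {ι : Type*} {b : ℝ} (hb : 0 < b)
    {S : Finset ι} (hS : S.Nonempty) (f : ι → ℝ) :
    b ^ ((∑ i ∈ S, f i) / #S) ≤ (∑ i ∈ S, b ^ f i) / #S := by
  have hcard : (0 : ℝ) < #S := by exact_mod_cast hS.card_pos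
  have := (convexOn_rpow_left hb).map_sum_le (t := S) (w := fun _ => 1 / (#S : ℝ)) (p := f)
    (fun _ _ => by positivity) (by simp [hcard.ne']) (fun _ _ => Set.mem_univ _)
  simpa only [smul_eq_mul, ← mul_sum, one_div_mul_eq_div, ← sum_div] using this

open InformationTheory in
theorem prefix_free_card_le_general (S : Finset (List Bool))
    (hpf : ∀ s ∈ S, ∀ t ∈ S, s <+: t → s = t) :
    Real.logb 2 (S.card : ℝ) ≤ (∑ s ∈ S, (s.length : ℝ)) / (S.card : ℝ) ∧
    (S.card : ℝ) ≤ (2 : ℝ) ^ ((∑ s ∈ S, (s.length : ℝ)) / (S.card : ℝ)) := by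
  rcases S.eq_empty_or_nonempty with rfl | hS
  · simp
  have hcard : (0 : ℝ) < S.card := by exact_mod_cast hS.card_pos
  set A := (∑ s ∈ S, (s.length : ℝ)) / S.card
  have hkraft : ∑ s ∈ S, (1 / 2 : ℝ) ^ (s.length : ℝ) ≤ 1 := by
    simpa [Real.rpow_natCast] using PrefixFree.sum_pow_length_le_one (α := Bool) hpf
  have hjensen : ((2 : ℝ) ^ A)⁻¹ ≤ (S.card : ℝ)⁻¹ :=
    calc ((2 : ℝ) ^ A)⁻¹ = (1 / 2 : ℝ) ^ A := by
          rw [Real.div_rpow zero_le_one zero_le_two, Real.one_rpow, one_div]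
      _ ≤ (∑ s ∈ S, (1 / 2 : ℝ) ^ (s.length : ℝ)) / S.card :=
          Real.rpow_sum_div_card_le_sum_rpow_div_card (by norm_num) hS _
      _ ≤ 1 / S.card := by gcongr
      _ = (S.card : ℝ)⁻¹ := one_div _
  have hbound : (S.card : ℝ) ≤ 2 ^ A := (inv_le_inv₀ (by positivity) hcard).1 hjensen
  exact ⟨(Real.logb_le_iff_le_rpow one_lt_two hcard).2 hbound, hbound⟩

/-- For a finite nonempty prefix-free set `S` of finite binary strings, `log₂ |S|` is at most
the average length of the strings in `S`; equivalently, `|S| ≤ 2 ^ ((∑ s ∈ S, |s|) / |S|)`. -/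
theorem prefix_free_card_le (S : Finset (List Bool)) (hS : S.Nonempty)
    (hpf : ∀ s ∈ S, ∀ t ∈ S, s <+: t → s = t) :
    Real.logb 2 (S.card : ℝ) ≤ (∑ s ∈ S, (s.length : ℝ)) / (S.card : ℝ) ∧
    (S.card : ℝ) ≤ (2 : ℝ) ^ ((∑ s ∈ S, (s.length : ℝ)) / (S.card : ℝ)) :=
  prefix_free_card_le_general S hpf
end

section
/- Let k ≥ 1, let F be a k-CNF formula over n Boolean variables, let α be a satisfying assignment of F, let I be the set of directions in which α is isolated, and for each i ∈ I fix a critical clause C_i of F for α and i (so C_i contains a literal of variable i made true by α and all other literals of C_i are made false by α, and C_i has at most k literals). If π is a uniformly random permutation of the n variables, then the expected number of directions i ∈ I such that variable i occurs after all other variables of C_i in the order π is at least |I|/k. -/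
open Classical

/-!
Each direction `i ∈ I` comes with the variable set `S` of its critical clause, of size at most
`k`. Composing with a transposition shows that every element of `S` is equally likely to be the
last element of `S` in a random order, and exactly one of them is, so `i` is last with probability
`1 / |S| ≥ 1 / k`. Linearity of expectation finishes the proof.
-/

open Finset

namespace Equiv.Perm

variable {ι : Type*} [LinearOrder ι]

def IsLastIn (π : Perm ι) (S : Finset ι) (i : ι) : Prop :=
  ∀ s ∈ S, s ≠ i → π s < π i

theorem IsLastIn.mul_swap {π : Perm ι} {S : Finset ι} {i j : ι} (hi : i ∈ S)
    (h : π.IsLastIn S j) : (π * swap i j).IsLastIn S i := by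
  intro s hs hsi
  rw [mul_apply, mul_apply, swap_apply_left]
  refine h _ ?_ ?_
  · rcases eq_or_ne s j with rfl | hsj
    · rwa [swap_apply_right]
    · rwa [swap_apply_of_ne_of_ne hsi hsj]
  · rwa [Ne, swap_apply_eq_iff, swap_apply_right]

theorem card_isLastIn_eq [Fintype ι] {S : Finset ι} {i j : ι} (hi : i ∈ S) (hj : j ∈ S) :
    #{π : Perm ι | π.IsLastIn S i} = #{π : Perm ι | π.IsLastIn S j} := by
  refine card_equiv (Equiv.mulRight (swap i j)) fun π => ?_
  simp only [mem_filter, mem_univ, true_and]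
  refine ⟨fun h => ?_, fun h => ?_⟩
  · rw [swap_comm]; exact h.mul_swap hj
  · simpa [mul_assoc] using h.mul_swap (j := j) hi

theorem card_filter_isLastIn_eq_one (π : Perm ι) {S : Finset ι} (hS : S.Nonempty) :
    #{j ∈ S | π.IsLastIn S j} = 1 := by
  obtain ⟨j, hj, hmax⟩ := S.exists_max_image π hS
  refine card_eq_one.2 ⟨j, eq_singleton_iff_unique_mem.2 ⟨mem_filter.2 ⟨hj, ?_⟩, ?_⟩⟩
  · exact fun s hs hsj => (hmax s hs).lt_of_ne (π.injective.ne hsj)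
  · rintro j' hj'
    by_contra hne
    exact ((mem_filter.1 hj').2 j hj (Ne.symm hne)).not_ge (hmax j' (mem_filter.1 hj').1)

theorem card_mul_card_isLastIn [Fintype ι] {S : Finset ι} {i : ι} (hi : i ∈ S) :
    #S * #{π : Perm ι | π.IsLastIn S i} = (Fintype.card ι).factorial := by
  calc #S * #{π : Perm ι | π.IsLastIn S i}
      = ∑ j ∈ S, #{π : Perm ι | π.IsLastIn S j} := by
        rw [sum_congr rfl fun j hj => card_isLastIn_eq hj hi, sum_const, smul_eq_mul]
    _ = ∑ π : Perm ι, #{j ∈ S | π.IsLastIn S j} :=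
        (sum_card_bipartiteAbove_eq_sum_card_bipartiteBelow _).symm
    _ = (Fintype.card ι).factorial := by
        simp [card_filter_isLastIn_eq_one _ ⟨i, hi⟩, Fintype.card_perm]

theorem factorial_le_mul_card_lastIn_fst [Fintype ι] {β : Type*} {C : Finset (ι × β)} {i : ι}
    {b : β} {k : ℕ} (hiC : (i, b) ∈ C) (hC : #C ≤ k) :
    (Fintype.card ι).factorial ≤ k * #{π : Perm ι | ∀ l ∈ C, l.1 ≠ i → π l.1 < π i} := by
  have hlast : #{π : Perm ι | ∀ l ∈ C, l.1 ≠ i → π l.1 < π i}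
      = #{π : Perm ι | π.IsLastIn (C.image Prod.fst) i} := by
    simp [IsLastIn]
  rw [hlast, ← card_mul_card_isLastIn (mem_image_of_mem Prod.fst hiC)]
  exact Nat.mul_le_mul_right _ (card_image_le.trans hC)

end Equiv.Perm

theorem expected_last_in_critical_clause_ge_general {n k : ℕ}
    (α : Fin n → Bool)
    (I : Finset (Fin n))
    (Cc : Fin n → Finset (Fin n × Bool))
    (hlit : ∀ i ∈ I, (i, α i) ∈ Cc i)
    (hcard : ∀ i ∈ I, (Cc i).card ≤ k) :
    (I.card : ℝ) / (k : ℝ) ≤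
      (∑ π : Equiv.Perm (Fin n),
          ((I.filter fun i => ∀ l ∈ Cc i, l.1 ≠ i → π l.1 < π i).card : ℝ)) /
        (Nat.factorial n : ℝ) := by
  have hswap : ∑ π : Equiv.Perm (Fin n),
      #(I.filter fun i => ∀ l ∈ Cc i, l.1 ≠ i → π l.1 < π i)
      = ∑ i ∈ I, #{π : Equiv.Perm (Fin n) | ∀ l ∈ Cc i, l.1 ≠ i → π l.1 < π i} :=
    sum_card_bipartiteAbove_eq_sum_card_bipartiteBelow _
  have hcount : #I * n.factorial ≤ k * ∑ π : Equiv.Perm (Fin n),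
      #(I.filter fun i => ∀ l ∈ Cc i, l.1 ≠ i → π l.1 < π i) := by
    rw [hswap, mul_sum, ← smul_eq_mul, ← sum_const]
    refine sum_le_sum fun i hi => ?_
    simpa using Equiv.Perm.factorial_le_mul_card_lastIn_fst (hlit i hi) (hcard i hi)
  rcases k.eq_zero_or_pos with rfl | hk
  · rw [Nat.cast_zero, div_zero]
    positivity
  rw [div_le_div_iff₀ (by exact_mod_cast hk) (by positivity), mul_comm _ (k : ℝ)]
  exact_mod_cast hcount

/-- Satisfiability Coding Lemma (key counting step): let `F` be a `k`-CNF with `k ≥ 1`,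
let `α` be a satisfying assignment, let `I` be the set of directions in which `α` is
isolated, and for each `i ∈ I` fix a critical clause `Cc i` of `F` for `α` and `i`.
For a uniformly random permutation `π` of the `n` variables, the expected number of
directions `i ∈ I` such that variable `i` occurs after all other variables of `Cc i`
in the order `π` is at least `|I| / k`. -/
theorem expected_last_in_critical_clause_ge {n k : ℕ} (hk : 1 ≤ k)
    (F : Finset (Finset (Fin n × Bool))) (hkcnf : ∀ C ∈ F, C.card ≤ k)
    (α : Fin n → Bool) (hsat : Satisfies F α)
    (I : Finset (Fin n)) (hI : ∀ i : Fin n, i ∈ I ↔ ¬ Satisfies F (flipAt α i))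
    (Cc : Fin n → Finset (Fin n × Bool))
    (hmem : ∀ i ∈ I, Cc i ∈ F)
    (hlit : ∀ i ∈ I, (i, α i) ∈ Cc i)
    (hfalse : ∀ i ∈ I, ∀ l ∈ Cc i, l ≠ (i, α i) → α l.1 ≠ l.2)
    (hcard : ∀ i ∈ I, (Cc i).card ≤ k) :
    (I.card : ℝ) / (k : ℝ) ≤
      (∑ π : Equiv.Perm (Fin n),
          ((I.filter fun i => ∀ l ∈ Cc i, l.1 ≠ i → π l.1 < π i).card : ℝ)) /
        (Nat.factorial n : ℝ) :=
  expected_last_in_critical_clause_ge_general α I Cc hlit hcard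
end

section
/- Every DeMorgan formula computing the parity function on n ≥ 1 variables has leaf size at least n^(3/2); that is, L(parity_n) ≥ n^(3/2). -/
/-!
Khrapchenko's method. If a formula `φ` is true on `A` and false on `B`, and `C` counts the
pairs `(a, b) ∈ A × B` at Hamming distance one, then `C² ≤ φ.leafSize * |A| * |B|`. At a literal
leaf every such pair differs in the leaf's variable, so `C ≤ min (|A|, |B|)`. At an AND node one
splits `B` by the subformula that fails (dually `A` at an OR node), and the bound survives because
`(c₁ + c₂)² ≤ (s₁ + s₂) a (b₁ + b₂)` whenever `cᵢ² ≤ sᵢ a bᵢ`. For parity take `A` odd and `B`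
even: every assignment has exactly `n` neighbours, all on the other side, so `C = n |A| = n |B|`
and every formula for parity has at least `n²` leaves.
-/

/-- A DeMorgan formula over `n` variables: leaves are literals `x_i` / `¬x_i` or Boolean
constants, internal nodes are fanin-two ANDs and ORs. -/
inductive DeMorgan (n : ℕ) : Type where
  | lit : Fin n → Bool → DeMorgan n
  | const : Bool → DeMorgan n
  | and : DeMorgan n → DeMorgan n → DeMorgan n
  | or : DeMorgan n → DeMorgan n → DeMorgan n

/-- Evaluation of a DeMorgan formula; the literal `lit i b` evaluates to `α i` if `b = true`
and to `¬ α i` if `b = false`. -/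
def DeMorgan.eval {n : ℕ} : DeMorgan n → (Fin n → Bool) → Bool
  | .lit i b, α => if b then α i else !(α i)
  | .const b, _ => b
  | .and f g, α => f.eval α && g.eval α
  | .or f g, α => f.eval α || g.eval α

/-- The leaf size of a DeMorgan formula: the number of literal leaves. -/
def DeMorgan.leafSize {n : ℕ} : DeMorgan n → ℕ
  | .lit _ _ => 1
  | .const _ => 0
  | .and f g => f.leafSize + g.leafSize
  | .or f g => f.leafSize + g.leafSize

/-- `L f` is the minimum leaf size of a DeMorgan formula computing `f`. -/
noncomputable def L {n : ℕ} (f : (Fin n → Bool) → Bool) : ℕ :=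
  sInf {m : ℕ | ∃ φ : DeMorgan n, φ.eval = f ∧ φ.leafSize = m}

/-- The parity function on `n` variables: the XOR of all coordinates. -/
def parity (n : ℕ) (α : Fin n → Bool) : Bool :=
  (∑ i : Fin n, (α i).toNat) % 2 == 1

open Finset Function

section Hamming

variable {ι β : Type*} [Fintype ι] [DecidableEq β]

theorem apply_eq_of_hammingDist_eq_one {a b : ι → β} {i j : ι} (h : hammingDist a b = 1)
    (hi : a i ≠ b i) (hj : j ≠ i) : a j = b j := by
  obtain ⟨k, hk⟩ := card_eq_one.mp h
  have hik : i = k := mem_singleton.mp (hk ▸ mem_filter.mpr ⟨mem_univ i, hi⟩)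
  by_contra hne
  exact hj (hik ▸ mem_singleton.mp (hk ▸ mem_filter.mpr ⟨mem_univ j, hne⟩))

variable [DecidableEq ι]

theorem hammingDist_update_self {a : ι → β} {i : ι} {x : β} (hx : a i ≠ x) :
    hammingDist a (update a i x) = 1 := by
  rw [hammingDist, card_eq_one]
  refine ⟨i, eq_singleton_iff_unique_mem.mpr ⟨by simpa using hx, fun j hj => ?_⟩⟩
  by_contra hji
  simp [update_of_ne hji] at hj

theorem hammingDist_eq_one_iff {a b : ι → β} :
    hammingDist a b = 1 ↔ ∃ i, a i ≠ b i ∧ b = update a i (b i) := by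
  refine ⟨fun h => ?_, fun ⟨i, hi, hb⟩ => hb ▸ hammingDist_update_self hi⟩
  obtain ⟨i, hi⟩ := card_pos.mp (h ▸ Nat.one_pos)
  have hi : a i ≠ b i := (mem_filter.mp hi).2
  refine ⟨i, hi, funext fun j => ?_⟩
  rcases eq_or_ne j i with rfl | hj
  · simp
  · rw [update_of_ne hj, apply_eq_of_hammingDist_eq_one h hi hj]

theorem hammingDist_eq_one_iff_exists_eq_update_not {a b : ι → Bool} :
    hammingDist a b = 1 ↔ ∃ i, b = update a i (!a i) := by
  rw [hammingDist_eq_one_iff]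
  refine exists_congr fun i => ⟨fun ⟨hi, hb⟩ => ?_, fun hb => ?_⟩
  · rwa [Bool.eq_not.mpr (Ne.symm hi)] at hb
  · subst hb; simp

end Hamming

theorem update_not_injective {ι : Type*} [DecidableEq ι] (a : ι → Bool) :
    Injective fun i => update a i (!a i) := by
  intro i j hij
  by_contra hne
  have := congrFun hij i
  simp [update_of_ne hne] at this

theorem add_sq_le_mul_of_sq_le_mul {c₁ c₂ s₁ s₂ a b₁ b₂ : ℕ} (h₁ : c₁ ^ 2 ≤ s₁ * a * b₁)
    (h₂ : c₂ ^ 2 ≤ s₂ * a * b₂) : (c₁ + c₂) ^ 2 ≤ (s₁ + s₂) * a * (b₁ + b₂) := by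
  have hcross : 2 * c₁ * c₂ ≤ a * (s₁ * b₂ + s₂ * b₁) := by
    refine (Nat.pow_le_pow_iff_left two_ne_zero).mp ?_
    calc (2 * c₁ * c₂) ^ 2 = 4 * c₁ ^ 2 * c₂ ^ 2 := by ring
      _ ≤ 4 * (s₁ * a * b₁) * (s₂ * a * b₂) := by gcongr
      _ = a ^ 2 * (4 * (s₁ * b₂) * (s₂ * b₁)) := by ring
      _ ≤ a ^ 2 * (s₁ * b₂ + s₂ * b₁) ^ 2 := by gcongr; exact four_mul_le_sq_add _ _
      _ = (a * (s₁ * b₂ + s₂ * b₁)) ^ 2 := by ring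
  calc (c₁ + c₂) ^ 2 = c₁ ^ 2 + 2 * c₁ * c₂ + c₂ ^ 2 := by ring
    _ ≤ s₁ * a * b₁ + a * (s₁ * b₂ + s₂ * b₁) + s₂ * a * b₂ := by gcongr
    _ = (s₁ + s₂) * a * (b₁ + b₂) := by ring

section NeighborPairs

variable {ι β : Type*} [Fintype ι] [DecidableEq β]

def neighborPairs (A B : Finset (ι → β)) : Finset ((ι → β) × (ι → β)) :=
  {p ∈ A ×ˢ B | hammingDist p.1 p.2 = 1}

theorem card_neighborPairs_comm (A B : Finset (ι → β)) :
    #(neighborPairs A B) = #(neighborPairs B A) :=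
  card_nbij' Prod.swap Prod.swap
    (fun p hp => by simp_all [neighborPairs, hammingDist_comm])
    (fun p hp => by simp_all [neighborPairs, hammingDist_comm])
    (fun _ _ => rfl) (fun _ _ => rfl)

theorem card_neighborPairs_filter_add_filter_not (A B : Finset (ι → β)) (P : (ι → β) → Prop)
    [DecidablePred P] :
    #(neighborPairs A {b ∈ B | P b}) + #(neighborPairs A {b ∈ B | ¬P b}) =
      #(neighborPairs A B) := by
  have hfilter (Q : (ι → β) → Prop) [DecidablePred Q] :
      neighborPairs A {b ∈ B | Q b} = {p ∈ neighborPairs A B | Q p.2} := by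
    simp only [neighborPairs, ← filter_product_right, filter_filter, and_comm]
  rw [hfilter, hfilter]
  exact card_filter_add_card_filter_not _

theorem card_neighborPairs_le_card_left {A B : Finset (ι → β)} {i : ι} {x y : β}
    (hA : ∀ a ∈ A, a i = x) (hB : ∀ b ∈ B, b i = y) (hxy : x ≠ y) :
    #(neighborPairs A B) ≤ #A := by
  refine card_le_card_of_injOn Prod.fst (fun p hp => (mem_product.mp (mem_filter.mp hp).1).1) ?_
  rintro ⟨a, b⟩ hab ⟨a', b'⟩ hab' (rfl : a = a')
  simp only [neighborPairs, coe_filter, mem_product, Set.mem_ofPred_eq] at hab hab'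
  have hi : a i ≠ b i := by rw [hA a hab.1.1, hB b hab.1.2]; exact hxy
  have hi' : a i ≠ b' i := by rw [hA a hab.1.1, hB b' hab'.1.2]; exact hxy
  suffices b = b' by rw [this]
  funext j
  rcases eq_or_ne j i with rfl | hj
  · rw [hB b hab.1.2, hB b' hab'.1.2]
  · rw [← apply_eq_of_hammingDist_eq_one hab.2 hi hj, apply_eq_of_hammingDist_eq_one hab'.2 hi' hj]

theorem sq_card_neighborPairs_le_of_filter {A B : Finset (ι → β)} (P : (ι → β) → Prop)
    [DecidablePred P] {s t : ℕ}
    (hP : #(neighborPairs A {b ∈ B | P b}) ^ 2 ≤ s * #A * #{b ∈ B | P b})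
    (hnP : #(neighborPairs A {b ∈ B | ¬P b}) ^ 2 ≤ t * #A * #{b ∈ B | ¬P b}) :
    #(neighborPairs A B) ^ 2 ≤ (s + t) * #A * #B := by
  rw [← card_neighborPairs_filter_add_filter_not A B P, ← card_filter_add_card_filter_not (s := B) P]
  exact add_sq_le_mul_of_sq_le_mul hP hnP

theorem sq_card_neighborPairs_le_card_mul_card {A B : Finset (ι → β)} {i : ι} {x y : β}
    (hA : ∀ a ∈ A, a i = x) (hB : ∀ b ∈ B, b i = y) (hxy : x ≠ y) :
    #(neighborPairs A B) ^ 2 ≤ #A * #B := by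
  rw [sq]
  refine Nat.mul_le_mul (card_neighborPairs_le_card_left hA hB hxy) ?_
  rw [card_neighborPairs_comm]
  exact card_neighborPairs_le_card_left hB hA hxy.symm

end NeighborPairs

namespace DeMorgan

variable {n : ℕ}

theorem sq_card_neighborPairs_le (φ : DeMorgan n) {A B : Finset (Fin n → Bool)}
    (hA : ∀ a ∈ A, φ.eval a = true) (hB : ∀ b ∈ B, φ.eval b = false) :
    #(neighborPairs A B) ^ 2 ≤ φ.leafSize * #A * #B := by
  induction φ generalizing A B with
  | lit i v =>
    rw [leafSize, one_mul]
    refine sq_card_neighborPairs_le_card_mul_card (i := i) (x := v) (y := !v)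
      (fun a ha => ?_) (fun b hb => ?_) (Bool.not_ne_self v).symm
    · cases v <;> simpa [eval] using hA a ha
    · cases v <;> simpa [eval] using hB b hb
  | const v =>
    cases v
    · simp [eq_empty_of_forall_notMem fun a ha => by simpa [eval] using hA a ha, neighborPairs]
    · simp [eq_empty_of_forall_notMem fun b hb => by simpa [eval] using hB b hb, neighborPairs]
  | and φ ψ ihφ ihψ =>
    simp only [eval, Bool.and_eq_true] at hA
    refine sq_card_neighborPairs_le_of_filter (fun b => φ.eval b = false)
      (ihφ (fun a ha => (hA a ha).1) (fun b hb => (mem_filter.mp hb).2))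
      (ihψ (fun a ha => (hA a ha).2) (fun b hb => ?_))
    obtain ⟨hb, hφ⟩ := mem_filter.mp hb
    simpa [eval, hφ] using hB b hb
  | or φ ψ ihφ ihψ =>
    simp only [eval, Bool.or_eq_false_iff] at hB
    rw [card_neighborPairs_comm, mul_right_comm]
    refine sq_card_neighborPairs_le_of_filter (fun a => φ.eval a = true) ?_ ?_
    · rw [card_neighborPairs_comm, mul_right_comm]
      exact ihφ (fun a ha => (mem_filter.mp ha).2) (fun b hb => (hB b hb).1)
    · rw [card_neighborPairs_comm, mul_right_comm]
      refine ihψ (fun a ha => ?_) (fun b hb => (hB b hb).2)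
      obtain ⟨ha, hφ⟩ := mem_filter.mp ha
      simpa [eval, hφ] using hA a ha

def rename {m n : ℕ} (e : Fin m → Fin n) : DeMorgan m → DeMorgan n
  | lit i b => lit (e i) b
  | const b => const b
  | and φ ψ => and (φ.rename e) (ψ.rename e)
  | or φ ψ => or (φ.rename e) (ψ.rename e)

theorem eval_rename {m n : ℕ} (e : Fin m → Fin n) (φ : DeMorgan m) (α : Fin n → Bool) :
    (φ.rename e).eval α = φ.eval (α ∘ e) := by
  induction φ with
  | lit i b => rfl
  | const b => rfl
  | and φ ψ ihφ ihψ => simp [rename, eval, ihφ, ihψ]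
  | or φ ψ ihφ ihψ => simp [rename, eval, ihφ, ihψ]

/-- Shannon expansion on the last variable. -/
theorem exists_eval_eq : ∀ {n : ℕ} (f : (Fin n → Bool) → Bool), ∃ φ : DeMorgan n, φ.eval = f
  | 0, f => ⟨const (f default), funext fun α => by rw [Subsingleton.elim α default]; rfl⟩
  | n + 1, f => by
    obtain ⟨φ₀, h₀⟩ := exists_eval_eq fun α => f (Fin.snoc α false)
    obtain ⟨φ₁, h₁⟩ := exists_eval_eq fun α => f (Fin.snoc α true)
    refine ⟨or (and (φ₀.rename Fin.castSucc) (lit (Fin.last n) false))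
      (and (φ₁.rename Fin.castSucc) (lit (Fin.last n) true)), funext fun α => ?_⟩
    conv_rhs => rw [← Fin.snoc_init_self α]
    simp only [eval, eval_rename, h₀, h₁, show α ∘ Fin.castSucc = Fin.init α from rfl]
    cases α (Fin.last n) <;> simp

end DeMorgan

theorem le_L_of_forall_le {n m : ℕ} {f : (Fin n → Bool) → Bool}
    (h : ∀ φ : DeMorgan n, φ.eval = f → m ≤ φ.leafSize) : m ≤ L f := by
  obtain ⟨φ, hφ⟩ := DeMorgan.exists_eval_eq f
  exact le_csInf ⟨_, φ, hφ, rfl⟩ fun _ ⟨ψ, hψ, hsize⟩ => hsize ▸ h ψ hψ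

theorem parity_update_not {n : ℕ} (a : Fin n → Bool) (i : Fin n) :
    parity n (update a i (!a i)) = !parity n a := by
  have hsum : ∑ j, (update a i (!a i) j).toNat + (a i).toNat = ∑ j, (a j).toNat + (!a i).toNat := by
    simp_rw [apply_update (fun _ => Bool.toNat), sum_update_of_mem (mem_univ i),
      sum_eq_add_sum_sdiff_singleton_of_mem (mem_univ i) fun j => (a j).toNat]
    ring
  rw [parity, parity, Bool.eq_iff_iff]
  revert hsum
  cases a i <;> simp <;> omega

theorem card_neighborPairs_parity {n : ℕ} (c : Bool) :
    #(neighborPairs {a | parity n a = c} {b | parity n b = !c}) = #{a | parity n a = c} * n := by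
  trans #(({a | parity n a = c} : Finset (Fin n → Bool)) ×ˢ (univ : Finset (Fin n)))
  · refine (card_bij (fun p _ => (p.1, update p.1 p.2 (!p.1 p.2))) ?_ ?_ ?_).symm
    · rintro ⟨a, i⟩ hai
      simp only [mem_product, mem_filter, mem_univ, true_and] at hai
      simp [neighborPairs, parity_update_not, hai, hammingDist_update_self]
    · rintro ⟨a, i⟩ - ⟨a', i'⟩ - h
      simp only [Prod.mk.injEq] at h
      obtain ⟨rfl, h⟩ := h
      rw [update_not_injective a h]
    · rintro ⟨a, b⟩ hab
      simp only [neighborPairs, mem_filter, mem_product, mem_univ, true_and] at hab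
      obtain ⟨i, rfl⟩ := hammingDist_eq_one_iff_exists_eq_update_not.mp hab.2
      exact ⟨(a, i), by simp [hab.1.1], rfl⟩
  · simp [card_product]

theorem sq_le_leafSize_of_eval_eq_parity {n : ℕ} (φ : DeMorgan n) (hφ : φ.eval = parity n) :
    n ^ 2 ≤ φ.leafSize := by
  rcases Nat.eq_zero_or_pos n with rfl | hn
  · simp
  set O : Finset (Fin n → Bool) := {a | parity n a = true}
  set E : Finset (Fin n → Bool) := {b | parity n b = false}
  have hOE : #(neighborPairs O E) = #O * n := card_neighborPairs_parity true
  have hEO : #(neighborPairs O E) = #E * n :=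
    (card_neighborPairs_comm O E).trans (card_neighborPairs_parity false)
  have hE : (fun _ => false) ∈ E := by simp [E, parity]
  have hO : update (fun _ => false) ⟨0, hn⟩ true ∈ O := by
    have h := parity_update_not (fun _ : Fin n => false) ⟨0, hn⟩
    simp_all [O, E]
  have hbound : n ^ 2 * (#O * #E) ≤ φ.leafSize * (#O * #E) :=
    calc n ^ 2 * (#O * #E) = (#O * n) * (#E * n) := by ring
      _ = #(neighborPairs O E) ^ 2 := by rw [← hOE, ← hEO, sq]
      _ ≤ φ.leafSize * #O * #E :=
        φ.sq_card_neighborPairs_le (by simp [O, hφ]) (by simp [E, hφ])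
      _ = φ.leafSize * (#O * #E) := mul_assoc _ _ _
  exact Nat.le_of_mul_le_mul_right hbound (Nat.mul_pos (card_pos.mpr ⟨_, hO⟩) (card_pos.mpr ⟨_, hE⟩))

/-- Subbotovskaya's lower bound: every DeMorgan formula computing the parity function on
`n ≥ 1` variables has leaf size at least `n^(3/2)`. -/
theorem parity_leafSize_lower_bound {n : ℕ} (hn : 1 ≤ n) :
    (n : ℝ) ^ ((3 : ℝ) / 2) ≤ (L (parity n) : ℝ) := by
  have hL : n ^ 2 ≤ L (parity n) := le_L_of_forall_le sq_le_leafSize_of_eval_eq_parity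
  calc (n : ℝ) ^ ((3 : ℝ) / 2) ≤ (n : ℝ) ^ (2 : ℝ) :=
        Real.rpow_le_rpow_of_exponent_le (by exact_mod_cast hn) (by norm_num)
    _ = ((n ^ 2 : ℕ) : ℝ) := by norm_num
    _ ≤ L (parity n) := by exact_mod_cast hL
end

section
/- Let F be a 2-CNF formula whose variable set is partitioned into three sets A, B, C, and classify each clause by the pair of sets containing its variables into the six types T_a, T_b, T_c, T_ab, T_bc, T_ac. Fix target counts s_a, s_b, s_c, s_ab, s_bc, s_ac. Define a tripartite graph whose vertex parts are: V_A = assignments to A satisfying exactly s_a clauses of type T_a, V_B = assignments to B satisfying exactly s_b clauses of type T_b, V_C = assignments to C satisfying exactly s_c clauses of type T_c; and where u ∈ V_A and v ∈ V_B are adjacent iff the combined assignment u ∪ v satisfies exactly s_ab clauses of type T_ab, and similarly for the pairs (V_B, V_C) with s_bc and (V_A, V_C) with s_ac. Then there exists a full assignment to the variables of F satisfying exactly s_D clauses of type T_D for each of the six types D if and only if the graph contains a triangle with one vertex in each of V_A, V_B, V_C. -/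
/-!
An assignment satisfies a clause all of whose variables lie in `S` exactly when its restriction
to `S` does. A clause with at most two literals that meets both of two disjoint parts has its
variables inside their union, so it is satisfied exactly when one of the two restrictions
satisfies it. Hence restricting a full assignment to `A`, `B`, `C` gives a triangle with the same
six counts, and conversely the three vertices of a triangle glue to a full assignment.
-/

open Classical

/-- The set of variables occurring in a clause (a clause is a finite set of literals, a
literal being a pair of a variable and a Boolean sign). -/
def varsOf {V : Type*} [DecidableEq V] (C : Finset (V × Bool)) : Finset V :=
  C.image Prod.fst

/-- An assignment `σ` to the variables in the subset `S` satisfies a clause `C` if it makes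
true some literal of `C` whose variable lies in `S`. -/
def SatOn {V : Type*} (S : Finset V) (σ : V → Bool) (C : Finset (V × Bool)) : Prop :=
  ∃ l ∈ C, l.1 ∈ S ∧ σ l.1 = l.2

section Clauses

variable {V : Type*} {S T : Finset V} {σ τ ρ : V → Bool} {Cl : Finset (V × Bool)}

theorem satOn_congr (h : Set.EqOn σ τ S) : SatOn S σ Cl ↔ SatOn S τ Cl := by
  unfold SatOn
  exact exists_congr fun l => and_congr_right fun _ => and_congr_right fun hl => by rw [h hl]

variable [DecidableEq V]

theorem satOn_union : SatOn (S ∪ T) σ Cl ↔ SatOn S σ Cl ∨ SatOn T σ Cl := by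
  simp only [SatOn, Finset.mem_union, or_and_right, and_or_left, exists_or]

theorem satOn_iff_of_varsOf_subset (h : varsOf Cl ⊆ S) :
    SatOn S σ Cl ↔ ∃ l ∈ Cl, σ l.1 = l.2 :=
  exists_congr fun _ => and_congr_right fun hl =>
    and_iff_right (h (Finset.mem_image_of_mem _ hl))

theorem varsOf_subset_union_of_card_le_two (hST : Disjoint S T) (h2 : Cl.card ≤ 2)
    (hS : ∃ v ∈ varsOf Cl, v ∈ S) (hT : ∃ v ∈ varsOf Cl, v ∈ T) : varsOf Cl ⊆ S ∪ T := by
  obtain ⟨a, ha, haS⟩ := hS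
  obtain ⟨b, hb, hbT⟩ := hT
  have hab : a ≠ b := fun h => Finset.disjoint_left.mp hST haS (h ▸ hbT)
  have hpair : {a, b} ⊆ varsOf Cl := Finset.insert_subset ha (Finset.singleton_subset_iff.2 hb)
  have hcard : (varsOf Cl).card ≤ ({a, b} : Finset V).card := by
    rw [Finset.card_pair hab]
    exact Finset.card_image_le.trans h2
  rw [← Finset.eq_of_subset_of_card_le hpair hcard]
  exact Finset.insert_subset (Finset.mem_union_left _ haS)
    (Finset.singleton_subset_iff.2 (Finset.mem_union_right _ hbT))

theorem and_exists_sat_iff_and_satOn (hτ : Set.EqOn τ σ S) (Cl : Finset (V × Bool)) :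
    (varsOf Cl ⊆ S ∧ ∃ l ∈ Cl, τ l.1 = l.2) ↔ (varsOf Cl ⊆ S ∧ SatOn S σ Cl) :=
  and_congr_right fun hsub =>
    (satOn_iff_of_varsOf_subset hsub).symm.trans (satOn_congr hτ)

theorem and_exists_sat_iff_and_satOn_or_satOn (hST : Disjoint S T) (h2 : Cl.card ≤ 2)
    (hτS : Set.EqOn τ σ S) (hτT : Set.EqOn τ ρ T) :
    (((∃ v ∈ varsOf Cl, v ∈ S) ∧ (∃ v ∈ varsOf Cl, v ∈ T)) ∧ ∃ l ∈ Cl, τ l.1 = l.2) ↔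
      (((∃ v ∈ varsOf Cl, v ∈ S) ∧ (∃ v ∈ varsOf Cl, v ∈ T)) ∧
        (SatOn S σ Cl ∨ SatOn T ρ Cl)) :=
  and_congr_right fun ⟨hS, hT⟩ => by
    rw [← satOn_iff_of_varsOf_subset (varsOf_subset_union_of_card_le_two hST h2 hS hT),
      satOn_union, satOn_congr hτS, satOn_congr hτT]

end Clauses

theorem exists_eqOn_eqOn_eqOn {V β : Type*} [DecidableEq V] {A B C : Finset V}
    (hAB : Disjoint A B) (hAC : Disjoint A C) (hBC : Disjoint B C) (σA σB σC : V → β) :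
    ∃ τ : V → β, Set.EqOn τ σA A ∧ Set.EqOn τ σB B ∧ Set.EqOn τ σC C := by
  refine ⟨A.piecewise σA (B.piecewise σB σC), fun v hv => ?_, fun v hv => ?_, fun v hv => ?_⟩
  · exact Finset.piecewise_eq_of_mem _ _ _ hv
  · rw [Finset.piecewise_eq_of_notMem _ _ _ (Finset.disjoint_right.mp hAB hv),
      Finset.piecewise_eq_of_mem _ _ _ hv]
  · rw [Finset.piecewise_eq_of_notMem _ _ _ (Finset.disjoint_right.mp hAC hv),
      Finset.piecewise_eq_of_notMem _ _ _ (Finset.disjoint_right.mp hBC hv)]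

/-- The instances are explicit so that they are unified with those of the filters at hand rather
than synthesized: the statement decides `∃ v ∈ varsOf Cl, v ∈ A` sometimes through `Fintype V` and
sometimes as a bounded quantifier over `varsOf Cl`, and these instances are not defeq. -/
theorem card_filter_congr {α : Type*} {s : Finset α} {p q : α → Prop}
    (hp : DecidablePred p) (hq : DecidablePred q) (h : ∀ x ∈ s, p x ↔ q x) :
    (s.filter p).card = (s.filter q).card :=
  congrArg Finset.card (Finset.filter_congr h)

theorem max2sat_triangle_iff_general {V : Type*} [Fintype V] [DecidableEq V]
    (F : Finset (Finset (V × Bool))) (h2 : ∀ Cl ∈ F, Cl.card ≤ 2)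
    (A B C : Finset V)
    (hAB : Disjoint A B) (hAC : Disjoint A C) (hBC : Disjoint B C)
    (sa sb sc sab sbc sac : ℕ) :
    (∃ τ : V → Bool,
        (F.filter fun Cl => varsOf Cl ⊆ A ∧ ∃ l ∈ Cl, τ l.1 = l.2).card = sa ∧
        (F.filter fun Cl => varsOf Cl ⊆ B ∧ ∃ l ∈ Cl, τ l.1 = l.2).card = sb ∧
        (F.filter fun Cl => varsOf Cl ⊆ C ∧ ∃ l ∈ Cl, τ l.1 = l.2).card = sc ∧
        (F.filter fun Cl => ((∃ v ∈ varsOf Cl, v ∈ A) ∧ (∃ v ∈ varsOf Cl, v ∈ B)) ∧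
            ∃ l ∈ Cl, τ l.1 = l.2).card = sab ∧
        (F.filter fun Cl => ((∃ v ∈ varsOf Cl, v ∈ B) ∧ (∃ v ∈ varsOf Cl, v ∈ C)) ∧
            ∃ l ∈ Cl, τ l.1 = l.2).card = sbc ∧
        (F.filter fun Cl => ((∃ v ∈ varsOf Cl, v ∈ A) ∧ (∃ v ∈ varsOf Cl, v ∈ C)) ∧
            ∃ l ∈ Cl, τ l.1 = l.2).card = sac) ↔
    (∃ σA σB σC : V → Bool,
        (F.filter fun Cl => varsOf Cl ⊆ A ∧ SatOn A σA Cl).card = sa ∧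
        (F.filter fun Cl => varsOf Cl ⊆ B ∧ SatOn B σB Cl).card = sb ∧
        (F.filter fun Cl => varsOf Cl ⊆ C ∧ SatOn C σC Cl).card = sc ∧
        (F.filter fun Cl => ((∃ v ∈ varsOf Cl, v ∈ A) ∧ (∃ v ∈ varsOf Cl, v ∈ B)) ∧
            (SatOn A σA Cl ∨ SatOn B σB Cl)).card = sab ∧
        (F.filter fun Cl => ((∃ v ∈ varsOf Cl, v ∈ B) ∧ (∃ v ∈ varsOf Cl, v ∈ C)) ∧
            (SatOn B σB Cl ∨ SatOn C σC Cl)).card = sbc ∧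
        (F.filter fun Cl => ((∃ v ∈ varsOf Cl, v ∈ A) ∧ (∃ v ∈ varsOf Cl, v ∈ C)) ∧
            (SatOn A σA Cl ∨ SatOn C σC Cl)).card = sac) := by
  constructor
  · rintro ⟨τ, ha, hb, hc, hab, hbc, hac⟩
    have hτ (S : Finset V) : Set.EqOn τ τ S := Set.eqOn_refl τ S
    refine ⟨τ, τ, τ, ?_, ?_, ?_, ?_, ?_, ?_⟩ <;> refine Eq.trans (Eq.symm ?_) ‹_›
    all_goals refine card_filter_congr _ _ fun Cl hCl => ?_
    · exact and_exists_sat_iff_and_satOn (hτ A) Cl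
    · exact and_exists_sat_iff_and_satOn (hτ B) Cl
    · exact and_exists_sat_iff_and_satOn (hτ C) Cl
    · exact and_exists_sat_iff_and_satOn_or_satOn hAB (h2 Cl hCl) (hτ A) (hτ B)
    · exact and_exists_sat_iff_and_satOn_or_satOn hBC (h2 Cl hCl) (hτ B) (hτ C)
    · exact and_exists_sat_iff_and_satOn_or_satOn hAC (h2 Cl hCl) (hτ A) (hτ C)
  · rintro ⟨σA, σB, σC, ha, hb, hc, hab, hbc, hac⟩
    obtain ⟨τ, hτA, hτB, hτC⟩ := exists_eqOn_eqOn_eqOn hAB hAC hBC σA σB σC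
    refine ⟨τ, ?_, ?_, ?_, ?_, ?_, ?_⟩ <;> refine Eq.trans ?_ ‹_›
    all_goals refine card_filter_congr _ _ fun Cl hCl => ?_
    · exact and_exists_sat_iff_and_satOn hτA Cl
    · exact and_exists_sat_iff_and_satOn hτB Cl
    · exact and_exists_sat_iff_and_satOn hτC Cl
    · exact and_exists_sat_iff_and_satOn_or_satOn hAB (h2 Cl hCl) hτA hτB
    · exact and_exists_sat_iff_and_satOn_or_satOn hBC (h2 Cl hCl) hτB hτC
    · exact and_exists_sat_iff_and_satOn_or_satOn hAC (h2 Cl hCl) hτA hτC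

/-- Williams' MAX-2-SAT reduction: let `F` be a 2-CNF whose variable set is partitioned into
`A`, `B`, `C`, classify the clauses into the six types `T_a, T_b, T_c, T_ab, T_bc, T_ac`
(by which parts contain their variables), and fix target counts `sa, …, sac`.  There is a
full assignment satisfying exactly `s_D` clauses of type `T_D` for each of the six types iff
the tripartite graph — whose parts are the assignments to `A` (resp. `B`, `C`) satisfying
exactly `sa` (resp. `sb`, `sc`) clauses of type `T_a` (resp. `T_b`, `T_c`), with edges between
partial assignments whose union satisfies exactly the target number of clauses of the
corresponding cross type — contains a triangle with one vertex in each part. -/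
theorem max2sat_triangle_iff {V : Type*} [Fintype V] [DecidableEq V]
    (F : Finset (Finset (V × Bool))) (h2 : ∀ Cl ∈ F, Cl.card ≤ 2)
    (A B C : Finset V)
    (hAB : Disjoint A B) (hAC : Disjoint A C) (hBC : Disjoint B C)
    (hcover : A ∪ B ∪ C = Finset.univ)
    (sa sb sc sab sbc sac : ℕ) :
    (∃ τ : V → Bool,
        (F.filter fun Cl => varsOf Cl ⊆ A ∧ ∃ l ∈ Cl, τ l.1 = l.2).card = sa ∧
        (F.filter fun Cl => varsOf Cl ⊆ B ∧ ∃ l ∈ Cl, τ l.1 = l.2).card = sb ∧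
        (F.filter fun Cl => varsOf Cl ⊆ C ∧ ∃ l ∈ Cl, τ l.1 = l.2).card = sc ∧
        (F.filter fun Cl => ((∃ v ∈ varsOf Cl, v ∈ A) ∧ (∃ v ∈ varsOf Cl, v ∈ B)) ∧
            ∃ l ∈ Cl, τ l.1 = l.2).card = sab ∧
        (F.filter fun Cl => ((∃ v ∈ varsOf Cl, v ∈ B) ∧ (∃ v ∈ varsOf Cl, v ∈ C)) ∧
            ∃ l ∈ Cl, τ l.1 = l.2).card = sbc ∧
        (F.filter fun Cl => ((∃ v ∈ varsOf Cl, v ∈ A) ∧ (∃ v ∈ varsOf Cl, v ∈ C)) ∧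
            ∃ l ∈ Cl, τ l.1 = l.2).card = sac) ↔
    (∃ σA σB σC : V → Bool,
        (F.filter fun Cl => varsOf Cl ⊆ A ∧ SatOn A σA Cl).card = sa ∧
        (F.filter fun Cl => varsOf Cl ⊆ B ∧ SatOn B σB Cl).card = sb ∧
        (F.filter fun Cl => varsOf Cl ⊆ C ∧ SatOn C σC Cl).card = sc ∧
        (F.filter fun Cl => ((∃ v ∈ varsOf Cl, v ∈ A) ∧ (∃ v ∈ varsOf Cl, v ∈ B)) ∧
            (SatOn A σA Cl ∨ SatOn B σB Cl)).card = sab ∧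
        (F.filter fun Cl => ((∃ v ∈ varsOf Cl, v ∈ B) ∧ (∃ v ∈ varsOf Cl, v ∈ C)) ∧
            (SatOn B σB Cl ∨ SatOn C σC Cl)).card = sbc ∧
        (F.filter fun Cl => ((∃ v ∈ varsOf Cl, v ∈ A) ∧ (∃ v ∈ varsOf Cl, v ∈ C)) ∧
            (SatOn A σA Cl ∨ SatOn C σC Cl)).card = sac) :=
  max2sat_triangle_iff_general F h2 A B C hAB hAC hBC sa sb sc sab sbc sac
end

section
/- Let F be a CNF formula over a variable set V of size n with m clauses, let k ≥ 2 divide n, and partition V into k blocks V_1, …, V_k of size n/k each. Define a graph G as follows: for each block V_ℓ, take one vertex for each of the 2^(n/k) assignments to V_ℓ plus one dummy vertex, and make these 2^(n/k) + 1 vertices a clique; additionally, for each clause C of F take one clause vertex, adjacent exactly to those assignment vertices whose partial assignment satisfies C (i.e., makes true some literal of C whose variable lies in the corresponding block); dummy vertices are adjacent only to the vertices of their own clique. Then G has a dominating set of size at most k if and only if F is satisfiable. -/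
/-!
Each dummy vertex is dominated only from within its own clique, and the `k` cliques are
disjoint, so a dominating set of size at most `k` meets every clique in exactly one vertex and
contains no clause vertex. Its assignment vertices, living on disjoint variable blocks, combine
into one assignment of `V`, and a clause vertex is dominated only by an assignment vertex
satisfying the clause. Conversely, the restrictions of a satisfying assignment to the `k` blocks
dominate every vertex.
-/

open Classical

/-- The vertex type of the reduction graph: for each block `ℓ : Fin k`, one vertex for each
assignment to the variables of `B ℓ` (the left summand) plus one dummy vertex (the middle
summand `Fin k`), and one vertex for each clause of `F` (the right summand). -/
abbrev DSVert {V : Type*} {k : ℕ} (B : Fin k → Finset V)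
    (F : Finset (Finset (V × Bool))) : Type _ :=
  ((ℓ : Fin k) × ({v : V // v ∈ B ℓ} → Bool)) ⊕ Fin k ⊕ {C // C ∈ F}

/-- One-sided adjacency: assignment vertices of the same block are adjacent (clique), the
dummy vertex of a block is adjacent to the assignment vertices of its block, and a clause
vertex is adjacent exactly to the assignment vertices whose partial assignment satisfies
the clause. -/
def DSAdjCore {V : Type*} {k : ℕ} (B : Fin k → Finset V)
    (F : Finset (Finset (V × Bool))) : DSVert B F → DSVert B F → Prop
  | Sum.inl u, Sum.inl u' => u.1 = u'.1
  | Sum.inl u, Sum.inr (Sum.inl ℓ') => u.1 = ℓ'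
  | Sum.inl u, Sum.inr (Sum.inr C) =>
      ∃ l ∈ C.1, ∃ h : l.1 ∈ B u.1, u.2 ⟨l.1, h⟩ = l.2
  | _, _ => False

/-- The (symmetric, loopless) adjacency relation of the reduction graph. -/
def DSAdj {V : Type*} {k : ℕ} (B : Fin k → Finset V)
    (F : Finset (Finset (V × Bool))) (u v : DSVert B F) : Prop :=
  u ≠ v ∧ (DSAdjCore B F u v ∨ DSAdjCore B F v u)

theorem Finset.image_eq_and_injOn_of_card_le {α β : Type*} [DecidableEq β] {s : Finset α}
    {t : Finset β} {f : α → β} (hst : s.card ≤ t.card) (hts : t ⊆ s.image f) :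
    s.image f = t ∧ Set.InjOn f s := by
  have hcard : (s.image f).card ≤ t.card := card_image_le.trans hst
  have himage : t = s.image f := eq_of_subset_of_card_le hts hcard
  refine ⟨himage.symm, card_image_iff.mp (le_antisymm card_image_le ?_)⟩
  rwa [← himage]

namespace DSVert

variable {V : Type*} {k : ℕ} {B : Fin k → Finset V} {F : Finset (Finset (V × Bool))}

def block : DSVert B F → Option (Fin k)
  | Sum.inl u => some u.1
  | Sum.inr (Sum.inl ℓ) => some ℓ
  | Sum.inr (Sum.inr _) => none

theorem block_eq_of_dsAdj_dummy {u : DSVert B F} {ℓ : Fin k}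
    (h : DSAdj B F u (Sum.inr (Sum.inl ℓ))) : block u = some ℓ := by
  obtain ⟨-, h | h⟩ := h
  · rcases u with u | ℓ' | C
    · exact congrArg some h
    all_goals exact h.elim
  · rcases u with u | ℓ' | C <;> exact h.elim

theorem dsAdj_clause_iff {u : DSVert B F} {C : {C // C ∈ F}} :
    DSAdj B F u (Sum.inr (Sum.inr C)) ↔
      ∃ ℓ σ, u = Sum.inl ⟨ℓ, σ⟩ ∧ ∃ l ∈ C.1, ∃ h : l.1 ∈ B ℓ, σ ⟨l.1, h⟩ = l.2 := by
  constructor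
  · rintro ⟨-, h | h⟩
    · rcases u with ⟨ℓ, σ⟩ | ℓ' | C'
      · exact ⟨ℓ, σ, rfl, h⟩
      all_goals exact h.elim
    · rcases u with u | ℓ' | C' <;> exact h.elim
  · rintro ⟨ℓ, σ, rfl, h⟩
    exact ⟨Sum.inl_ne_inr, Or.inl h⟩

theorem dsAdj_inl_dummy (ℓ : Fin k) (σ : {v // v ∈ B ℓ} → Bool) :
    DSAdj B F (Sum.inl ⟨ℓ, σ⟩) (Sum.inr (Sum.inl ℓ)) :=
  ⟨Sum.inl_ne_inr, Or.inl rfl⟩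

theorem dsAdj_inl_inl {ℓ : Fin k} {σ σ' : {v // v ∈ B ℓ} → Bool} (h : σ ≠ σ') :
    DSAdj B F (Sum.inl ⟨ℓ, σ⟩) (Sum.inl ⟨ℓ, σ'⟩) :=
  ⟨by simpa using h, Or.inl rfl⟩

noncomputable def selectedAssignment (S : Finset (DSVert B F)) (v : V) : Bool :=
  decide (∃ ℓ σ, ∃ h : v ∈ B ℓ, Sum.inl ⟨ℓ, σ⟩ ∈ S ∧ σ ⟨v, h⟩ = true)

theorem selectedAssignment_eq (hBdisj : ∀ ℓ ℓ' : Fin k, ℓ ≠ ℓ' → Disjoint (B ℓ) (B ℓ'))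
    {S : Finset (DSVert B F)} (hinj : Set.InjOn block (S : Set (DSVert B F)))
    {ℓ : Fin k} {σ : {v // v ∈ B ℓ} → Bool} (hσ : Sum.inl ⟨ℓ, σ⟩ ∈ S) {v : V}
    (hv : v ∈ B ℓ) : selectedAssignment S v = σ ⟨v, hv⟩ := by
  have hunique : ∀ ℓ' σ', ∀ h' : v ∈ B ℓ', Sum.inl ⟨ℓ', σ'⟩ ∈ S →
      σ' ⟨v, h'⟩ = σ ⟨v, hv⟩ := by
    intro ℓ' σ' h' hσ'
    obtain rfl : ℓ' = ℓ := by
      by_contra hne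
      exact Finset.disjoint_left.mp (hBdisj _ _ hne) h' hv
    obtain rfl : σ' = σ := by simpa using hinj hσ' hσ rfl
    rfl
  cases hval : σ ⟨v, hv⟩
  · simp only [selectedAssignment, decide_eq_false_iff_not, not_exists, not_and]
    intro ℓ' σ' h' hσ'
    simp [hunique ℓ' σ' h' hσ', hval]
  · exact decide_eq_true ⟨ℓ, σ, hv, hσ, hval⟩

theorem satisfiable_of_dominatingSet
    (hBdisj : ∀ ℓ ℓ' : Fin k, ℓ ≠ ℓ' → Disjoint (B ℓ) (B ℓ'))
    {S : Finset (DSVert B F)} (hcard : S.card ≤ k)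
    (hdom : ∀ v : DSVert B F, v ∈ S ∨ ∃ u ∈ S, DSAdj B F u v) :
    ∀ C ∈ F, ∃ l ∈ C, selectedAssignment S l.1 = l.2 := by
  have hblocks : Finset.univ.image some ⊆ S.image block := by
    simp only [Finset.subset_iff, Finset.mem_image, Finset.mem_univ, true_and,
      forall_exists_index, forall_apply_eq_imp_iff]
    intro ℓ
    rcases hdom (Sum.inr (Sum.inl ℓ)) with hℓ | ⟨u, hu, hadj⟩
    · exact ⟨_, hℓ, rfl⟩
    · exact ⟨u, hu, block_eq_of_dsAdj_dummy hadj⟩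
  obtain ⟨himage, hinj⟩ := Finset.image_eq_and_injOn_of_card_le
    (by rwa [Finset.card_image_of_injective _ (Option.some_injective _), Finset.card_fin])
    hblocks
  intro C hC
  have hCS : (Sum.inr (Sum.inr ⟨C, hC⟩) : DSVert B F) ∉ S := fun hCS => by
    simpa [block, himage] using Finset.mem_image_of_mem block hCS
  obtain ⟨u, hu, hadj⟩ := (hdom _).resolve_left hCS
  obtain ⟨ℓ, σ, rfl, l, hl, hlB, hσl⟩ := dsAdj_clause_iff.mp hadj
  exact ⟨l, hl, (selectedAssignment_eq hBdisj hinj hu hlB).trans hσl⟩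

theorem dominatingSet_of_satisfiable (hcover : ∀ v, ∃ ℓ, v ∈ B ℓ) {τ : V → Bool}
    (hτ : ∀ C ∈ F, ∃ l ∈ C, τ l.1 = l.2) :
    ∃ S : Finset (DSVert B F), S.card ≤ k ∧
      ∀ v : DSVert B F, v ∈ S ∨ ∃ u ∈ S, DSAdj B F u v := by
  let restrict (ℓ : Fin k) : DSVert B F := Sum.inl ⟨ℓ, fun v => τ v.1⟩
  have hmem (ℓ : Fin k) : restrict ℓ ∈ Finset.univ.image restrict :=
    Finset.mem_image_of_mem _ (Finset.mem_univ ℓ)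
  refine ⟨Finset.univ.image restrict, Finset.card_image_le.trans_eq (Finset.card_fin k), ?_⟩
  rintro (⟨ℓ, σ⟩ | ℓ | ⟨C, hC⟩)
  · by_cases hσ : (fun v => τ v.1) = σ
    · exact Or.inl (hσ ▸ hmem ℓ)
    · exact Or.inr ⟨_, hmem ℓ, dsAdj_inl_inl hσ⟩
  · exact Or.inr ⟨_, hmem ℓ, dsAdj_inl_dummy ℓ _⟩
  · obtain ⟨l, hl, hτl⟩ := hτ C hC
    obtain ⟨ℓ, hlB⟩ := hcover l.1
    exact Or.inr ⟨_, hmem ℓ, dsAdj_clause_iff.mpr ⟨ℓ, _, rfl, l, hl, hlB, hτl⟩⟩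

end DSVert

theorem dominatingSet_iff_satisfiable_general {V : Type*} [Fintype V] [DecidableEq V]
    {k : ℕ}
    (B : Fin k → Finset V)
    (hBdisj : ∀ ℓ ℓ' : Fin k, ℓ ≠ ℓ' → Disjoint (B ℓ) (B ℓ'))
    (hBcover : Finset.univ.biUnion B = (Finset.univ : Finset V))
    (F : Finset (Finset (V × Bool))) :
    (∃ S : Finset (DSVert B F), S.card ≤ k ∧
        ∀ v : DSVert B F, v ∈ S ∨ ∃ u ∈ S, DSAdj B F u v) ↔
      ∃ τ : V → Bool, ∀ C ∈ F, ∃ l ∈ C, τ l.1 = l.2 := by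
  have hcover : ∀ v, ∃ ℓ, v ∈ B ℓ := fun v => by
    simpa using hBcover.ge (Finset.mem_univ v)
  exact ⟨fun ⟨S, hcard, hdom⟩ => ⟨_, DSVert.satisfiable_of_dominatingSet hBdisj hcard hdom⟩,
    fun ⟨_, hτ⟩ => DSVert.dominatingSet_of_satisfiable hcover hτ⟩

/-- P\u{a}tras\c{c}u–Williams reduction from CNF-SAT to `k`-Dominating Set: for a CNF formula
`F` over a variable set `V` of size `n`, with `k ≥ 2` dividing `n` and `V` partitioned into
`k` blocks of size `n / k`, the reduction graph has a dominating set of size at most `k`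
iff `F` is satisfiable. -/
theorem dominatingSet_iff_satisfiable {V : Type*} [Fintype V] [DecidableEq V]
    {k : ℕ} (hk : 2 ≤ k) (hdvd : k ∣ Fintype.card V)
    (B : Fin k → Finset V)
    (hBdisj : ∀ ℓ ℓ' : Fin k, ℓ ≠ ℓ' → Disjoint (B ℓ) (B ℓ'))
    (hBcover : Finset.univ.biUnion B = (Finset.univ : Finset V))
    (hBcard : ∀ ℓ : Fin k, (B ℓ).card = Fintype.card V / k)
    (F : Finset (Finset (V × Bool))) :
    (∃ S : Finset (DSVert B F), S.card ≤ k ∧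
        ∀ v : DSVert B F, v ∈ S ∨ ∃ u ∈ S, DSAdj B F u v) ↔
      ∃ τ : V → Bool, ∀ C ∈ F, ∃ l ∈ C, τ l.1 = l.2 :=
  dominatingSet_iff_satisfiable_general B hBdisj hBcover F
end
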